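/- For an asymptotically stable switched linear system with quadratic cost c(x) = xᵀQx (Q ≻ 0), there exists for each l a family of quadratic functions {V_α^l}_{α ∈ ⟨M⟩^l} satisfying the path-complete inequalities on the dual De Bruijn graph H_l^T(M) such that V^l(x) := max_α V_α^l(x) satisfies (1−η_l)V^l(x) ≤ J(x) ≤ V^l(x) for all x, and hence V^l(x) → J(x) pointwise as l → ∞. -/

import Mathlib

open scoped ENNReal
open Filter Matrix

/-- Trajectory of the switched linear system `x_{k+1} = A_{σ(k)} x_k`. -/
def trajL {n M : ℕ} (A : Fin M → Matrix (Fin n) (Fin n) ℝ)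
    (σ : ℕ → Fin M) (x : Fin n → ℝ) : ℕ → (Fin n → ℝ)
  | 0 => x
  | k + 1 => A (σ k) *ᵥ trajL A σ x k

/-- Quadratic form `xᵀ Q x`. -/
def quadForm {n : ℕ} (Q : Matrix (Fin n) (Fin n) ℝ) (x : Fin n → ℝ) : ℝ :=
  x ⬝ᵥ (Q *ᵥ x)

/-- Extension of a finite word `w ∈ ⟨M⟩^l` to a switching signal `ℕ → ⟨M⟩`
(using `d` beyond time `l`; the truncated cost does not depend on `d`). -/
def wordExt {M l : ℕ} (w : Fin l → Fin M) (d : Fin M) : ℕ → Fin M :=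
  fun k => if h : k < l then w ⟨k, h⟩ else d

/-- Truncated cost `Ṽ_γ(x) = ∑_{k=0}^{l} ξ(k,x,σ_γ)ᵀ Q ξ(k,x,σ_γ)` where `σ_γ`
follows the modes of the word `γ ∈ ⟨M⟩^l`. -/
def truncCost {n M l : ℕ} (A : Fin M → Matrix (Fin n) (Fin n) ℝ)
    (Q : Matrix (Fin n) (Fin n) ℝ) (d : Fin M) (γ : Fin l → Fin M)
    (x : Fin n → ℝ) : ℝ :=
  ∑ k ∈ Finset.range (l + 1), quadForm Q (trajL A (wordExt γ d) x k)

/-- Worst-case value function of the switched linear system with cost `xᵀQx`. -/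
noncomputable def valueFunLin {n M : ℕ} (A : Fin M → Matrix (Fin n) (Fin n) ℝ)
    (Q : Matrix (Fin n) (Fin n) ℝ) (x : Fin n → ℝ) : ℝ≥0∞ :=
  ⨆ σ : ℕ → Fin M, ∑' k : ℕ, ENNReal.ofReal (quadForm Q (trajL A σ x k))

/-!
Take `V_γ^l := (1 - η_l)⁻¹ Ṽ_γ`, where `Ṽ_γ` is the cost of the first `l + 1` steps along the
word `γ`; it is quadratic because trajectories depend linearly on the initial state. Dropping
the first letter of a word `w ∈ ⟨M⟩^{l+1}` changes the truncated cost by `c(x) - c(ξ_{l+1})`,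
and `c(ξ_{l+1}) ≤ η_l c(x)`; this is exactly the path-complete inequality for the scaled
functions. Clearly `Ṽ_γ ≤ J`. Conversely, cutting an infinite trajectory into blocks of length
`l + 1`, the cost of each block is at most `η_l` times the cost of the previous one, so
`J ≤ (1 - η_l)⁻¹ max_γ Ṽ_γ`. As `η_l → 0` the two bounds squeeze `V^l` to `J`.
-/

open Finset

variable {n M : ℕ}

section QuadraticForms

lemma quadForm_nonneg {Q : Matrix (Fin n) (Fin n) ℝ} (hQ : Q.PosSemidef) (x : Fin n → ℝ) :
    0 ≤ quadForm Q x := by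
  simpa [quadForm] using hQ.dotProduct_mulVec_nonneg x

lemma quadForm_add (P P' : Matrix (Fin n) (Fin n) ℝ) (x : Fin n → ℝ) :
    quadForm (P + P') x = quadForm P x + quadForm P' x := by
  simp only [quadForm, add_mulVec, dotProduct_add]

lemma quadForm_smul (c : ℝ) (P : Matrix (Fin n) (Fin n) ℝ) (x : Fin n → ℝ) :
    quadForm (c • P) x = c * quadForm P x := by
  simp only [quadForm, smul_mulVec, dotProduct_smul, smul_eq_mul]

lemma quadForm_transpose_mul_mul (P B : Matrix (Fin n) (Fin n) ℝ) (x : Fin n → ℝ) :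
    quadForm (Bᵀ * P * B) x = quadForm P (B *ᵥ x) := by
  rw [quadForm, quadForm, ← mulVec_mulVec, ← mulVec_mulVec, dotProduct_mulVec, vecMul_transpose]

def IsPSDQuadratic (f : (Fin n → ℝ) → ℝ) : Prop :=
  ∃ P : Matrix (Fin n) (Fin n) ℝ, P.PosSemidef ∧ ∀ x, f x = quadForm P x

namespace IsPSDQuadratic

lemma of_posSemidef {P : Matrix (Fin n) (Fin n) ℝ} (hP : P.PosSemidef) :
    IsPSDQuadratic (quadForm P) :=
  ⟨P, hP, fun _ => rfl⟩

lemma zero : IsPSDQuadratic (fun _ : Fin n → ℝ => (0 : ℝ)) :=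
  ⟨0, .zero, fun x => by simp [quadForm]⟩

lemma add {f g : (Fin n → ℝ) → ℝ} (hf : IsPSDQuadratic f) (hg : IsPSDQuadratic g) :
    IsPSDQuadratic (fun x => f x + g x) := by
  obtain ⟨P, hP, hf⟩ := hf
  obtain ⟨P', hP', hg⟩ := hg
  exact ⟨P + P', hP.add hP', fun x => by simp only [hf, hg, quadForm_add]⟩

lemma sum {ι : Type*} (s : Finset ι) {f : ι → (Fin n → ℝ) → ℝ}
    (hf : ∀ i ∈ s, IsPSDQuadratic (f i)) : IsPSDQuadratic (fun x => ∑ i ∈ s, f i x) := by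
  classical
  induction s using Finset.induction_on with
  | empty => simpa using zero
  | insert a s ha ih =>
    simp_rw [sum_insert ha]
    exact (hf a (mem_insert_self a s)).add (ih fun i hi => hf i (mem_insert_of_mem hi))

lemma const_mul {f : (Fin n → ℝ) → ℝ} (hf : IsPSDQuadratic f) {c : ℝ} (hc : 0 ≤ c) :
    IsPSDQuadratic (fun x => c * f x) := by
  obtain ⟨P, hP, hf⟩ := hf
  exact ⟨c • P, hP.smul hc, fun x => by simp only [hf, quadForm_smul]⟩

lemma comp_mulVec {f : (Fin n → ℝ) → ℝ} (hf : IsPSDQuadratic f) (B : Matrix (Fin n) (Fin n) ℝ) :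
    IsPSDQuadratic (fun x => f (B *ᵥ x)) := by
  obtain ⟨P, hP, hf⟩ := hf
  refine ⟨Bᵀ * P * B, ?_, fun x => by simp only [hf, quadForm_transpose_mul_mul]⟩
  simpa using hP.conjTranspose_mul_mul_same B

end IsPSDQuadratic

end QuadraticForms

section Trajectories

variable (A : Fin M → Matrix (Fin n) (Fin n) ℝ)

lemma trajL_congr {σ σ' : ℕ → Fin M} (x : Fin n → ℝ) :
    ∀ {k : ℕ}, (∀ i < k, σ i = σ' i) → trajL A σ x k = trajL A σ' x k
  | 0, _ => rfl
  | k + 1, h => by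
    rw [trajL, trajL, h k k.lt_succ_self, trajL_congr x fun i hi => h i (hi.trans k.lt_succ_self)]

lemma trajL_add (σ : ℕ → Fin M) (x : Fin n → ℝ) (m : ℕ) :
    ∀ j, trajL A σ x (m + j) = trajL A (fun i => σ (m + i)) (trajL A σ x m) j
  | 0 => rfl
  | j + 1 => by rw [← add_assoc, trajL, trajL, trajL_add σ x m j]

lemma exists_trajL_eq_mulVec (σ : ℕ → Fin M) :
    ∀ k, ∃ B : Matrix (Fin n) (Fin n) ℝ, ∀ x, trajL A σ x k = B *ᵥ x
  | 0 => ⟨1, fun x => (one_mulVec x).symm⟩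
  | k + 1 => by
    obtain ⟨B, hB⟩ := exists_trajL_eq_mulVec σ k
    exact ⟨A (σ k) * B, fun x => by rw [trajL, hB, mulVec_mulVec]⟩

lemma wordExt_of_lt {l : ℕ} (w : Fin l → Fin M) (d : Fin M) {k : ℕ} (hk : k < l) :
    wordExt w d k = w ⟨k, hk⟩ :=
  dif_pos hk

end Trajectories

section TruncatedCost

variable (A : Fin M → Matrix (Fin n) (Fin n) ℝ) (Q : Matrix (Fin n) (Fin n) ℝ) (d : Fin M)
  {l : ℕ}

lemma truncCost_eq_sum_trajL (σ : ℕ → Fin M) (x : Fin n → ℝ) :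
    truncCost A Q d (fun k : Fin l => σ k) x
      = ∑ k ∈ range (l + 1), quadForm Q (trajL A σ x k) := by
  refine sum_congr rfl fun k hk => congrArg _ (trajL_congr A x fun i hi => ?_)
  exact wordExt_of_lt _ d (by rw [mem_range] at hk; omega)

lemma isPSDQuadratic_truncCost (hQ : Q.PosSemidef)
    (γ : Fin l → Fin M) : IsPSDQuadratic (truncCost A Q d γ) := by
  refine IsPSDQuadratic.sum _ fun k _ => ?_
  obtain ⟨B, hB⟩ := exists_trajL_eq_mulVec A (wordExt γ d) k
  simp only [hB]
  exact (IsPSDQuadratic.of_posSemidef hQ).comp_mulVec B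

lemma truncCost_tail_add (σ : ℕ → Fin M) (x : Fin n → ℝ) :
    truncCost A Q d (fun k : Fin l => σ ((k : ℕ) + 1)) (A (σ 0) *ᵥ x) + quadForm Q x
      = truncCost A Q d (fun k : Fin l => σ k) x + quadForm Q (trajL A σ x (l + 1)) := by
  have hshift : ∀ k, trajL A (fun i => σ (i + 1)) (A (σ 0) *ᵥ x) k = trajL A σ x (k + 1) := by
    intro k
    rw [add_comm k 1, trajL_add]
    simp only [Nat.add_comm 1]
    rfl
  rw [truncCost_eq_sum_trajL A Q d (fun i => σ (i + 1)), truncCost_eq_sum_trajL]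
  simp only [hshift]
  rw [← sum_range_succ (fun k => quadForm Q (trajL A σ x k))]
  conv_rhs => rw [sum_range_succ']
  rfl

lemma quadForm_add_inv_mul_truncCost_succ_le {η : ℝ} (hη1 : η < 1)
    (hη : ∀ x σ, quadForm Q (trajL A σ x (l + 1)) ≤ η * quadForm Q x)
    (w : Fin (l + 1) → Fin M) (x : Fin n → ℝ) :
    quadForm Q x + (1 - η)⁻¹ * truncCost A Q d (fun k : Fin l => w k.succ) (A (w 0) *ᵥ x)
      ≤ (1 - η)⁻¹ * truncCost A Q d (fun k : Fin l => w k.castSucc) x := by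
  have hsucc : (fun k : Fin l => w k.succ) = fun k : Fin l => wordExt w d ((k : ℕ) + 1) :=
    funext fun k => (wordExt_of_lt w d (by omega)).symm
  have hcast : (fun k : Fin l => w k.castSucc) = fun k : Fin l => wordExt w d k :=
    funext fun k => (wordExt_of_lt w d (by omega)).symm
  have hfirst : w 0 = wordExt w d 0 := (wordExt_of_lt w d l.succ_pos).symm
  have htail := truncCost_tail_add A Q d (l := l) (wordExt w d) x
  rw [← hsucc, ← hcast, ← hfirst] at htail
  have hdecay := hη x (wordExt w d)
  have h1η : 0 < 1 - η := sub_pos.2 hη1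
  calc quadForm Q x + (1 - η)⁻¹ * truncCost A Q d (fun k : Fin l => w k.succ) (A (w 0) *ᵥ x)
      = (1 - η)⁻¹ * ((1 - η) * quadForm Q x
          + truncCost A Q d (fun k : Fin l => w k.succ) (A (w 0) *ᵥ x)) := by
        field_simp
    _ ≤ (1 - η)⁻¹ * truncCost A Q d (fun k : Fin l => w k.castSucc) x := by
        gcongr
        linarith

lemma ofReal_truncCost_le_valueFunLin (hQ : Q.PosSemidef)
    (γ : Fin l → Fin M) (x : Fin n → ℝ) :
    ENNReal.ofReal (truncCost A Q d γ x) ≤ valueFunLin A Q x := by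
  refine le_trans ?_ (le_iSup (fun σ : ℕ → Fin M =>
    ∑' k : ℕ, ENNReal.ofReal (quadForm Q (trajL A σ x k))) (wordExt γ d))
  rw [truncCost, ENNReal.ofReal_sum_of_nonneg fun k _ => quadForm_nonneg hQ _]
  exact ENNReal.sum_le_tsum _

end TruncatedCost

lemma ENNReal.tsum_le_inv_one_sub_mul_sum_range {f : ℕ → ℝ≥0∞} {a : ℝ≥0∞} {p : ℕ}
    (hp : 0 < p) (hf : ∀ k, f (k + p) ≤ a * f k) :
    ∑' k, f k ≤ (1 - a)⁻¹ * ∑ k ∈ range p, f k := by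
  have : NeZero p := ⟨hp.ne'⟩
  have hblock : ∀ j r, f (j * p + r) ≤ a ^ j * f r := by
    intro j r
    induction j with
    | zero => simp
    | succ j ih =>
      calc f ((j + 1) * p + r) = f (j * p + r + p) := by ring_nf
        _ ≤ a * f (j * p + r) := hf _
        _ ≤ a * (a ^ j * f r) := by gcongr
        _ = a ^ (j + 1) * f r := by ring
  calc ∑' k, f k = ∑' q : ℕ × Fin p, f (q.1 * p + q.2) :=
        ((Nat.divModEquiv p).symm.tsum_eq f).symm
    _ = ∑' j, ∑' r : Fin p, f (j * p + r) :=
        ENNReal.tsum_prod (f := fun j (r : Fin p) => f (j * p + r))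
    _ ≤ ∑' j, ∑' r : Fin p, a ^ j * f r :=
        ENNReal.tsum_le_tsum fun j => ENNReal.tsum_le_tsum fun r => hblock j r
    _ = (1 - a)⁻¹ * ∑ k ∈ range p, f k := by
        simp_rw [ENNReal.tsum_mul_left, ENNReal.tsum_mul_right, tsum_fintype,
          Fin.sum_univ_eq_sum_range, ENNReal.tsum_geometric]

lemma ENNReal.tendsto_of_mul_le_of_le {α : Type*} {F : Filter α} {s c : α → ℝ≥0∞} {J : ℝ≥0∞}
    (hc : Tendsto c F (nhds 1)) (hlow : ∀ᶠ i in F, c i * s i ≤ J) (hup : ∀ᶠ i in F, J ≤ s i) :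
    Tendsto s F (nhds J) := by
  have hdiv : Tendsto (fun i => J / c i) F (nhds J) := by
    simpa using ENNReal.Tendsto.const_div hc (Or.inl ENNReal.one_ne_top)
  refine tendsto_of_tendsto_of_tendsto_of_le_of_le' tendsto_const_nhds hdiv hup ?_
  filter_upwards [hlow, hc.eventually_ne one_ne_zero, hc.eventually_ne ENNReal.one_ne_top]
    with i hi h0 htop
  exact (ENNReal.le_div_iff_mul_le (Or.inl h0) (Or.inl htop)).2 (by rwa [mul_comm])

section Sandwich

variable (A : Fin M → Matrix (Fin n) (Fin n) ℝ) {Q : Matrix (Fin n) (Fin n) ℝ} (d : Fin M)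
  {l : ℕ} {η : ℝ}

lemma tsum_quadForm_trajL_le (hQ : Q.PosSemidef) (hη0 : 0 ≤ η)
    (hη : ∀ x σ, quadForm Q (trajL A σ x (l + 1)) ≤ η * quadForm Q x)
    (σ : ℕ → Fin M) (x : Fin n → ℝ) :
    ∑' k, ENNReal.ofReal (quadForm Q (trajL A σ x k))
      ≤ (1 - ENNReal.ofReal η)⁻¹ * ENNReal.ofReal (truncCost A Q d (fun k : Fin l => σ k) x) := by
  refine (ENNReal.tsum_le_inv_one_sub_mul_sum_range (a := ENNReal.ofReal η) l.succ_pos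
    fun k => ?_).trans_eq ?_
  · rw [trajL_add, ← ENNReal.ofReal_mul hη0]
    exact ENNReal.ofReal_le_ofReal (hη _ _)
  · rw [truncCost_eq_sum_trajL, ENNReal.ofReal_sum_of_nonneg fun k _ => quadForm_nonneg hQ _]

lemma valueFunLin_le_ofReal_iSup (hQ : Q.PosSemidef) (hη0 : 0 ≤ η) (hη1 : η < 1)
    (hη : ∀ x σ, quadForm Q (trajL A σ x (l + 1)) ≤ η * quadForm Q x) (x : Fin n → ℝ) :
    valueFunLin A Q x
      ≤ ENNReal.ofReal (⨆ γ : Fin l → Fin M, (1 - η)⁻¹ * truncCost A Q d γ x) := by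
  have h1η : 0 < 1 - η := sub_pos.2 hη1
  refine iSup_le fun σ => (tsum_quadForm_trajL_le A d hQ hη0 hη σ x).trans ?_
  rw [← ENNReal.ofReal_one, ← ENNReal.ofReal_sub _ hη0, ← ENNReal.ofReal_inv_of_pos h1η,
    ← ENNReal.ofReal_mul (inv_nonneg.2 h1η.le)]
  exact ENNReal.ofReal_le_ofReal
    (le_ciSup (f := fun γ : Fin l → Fin M => (1 - η)⁻¹ * truncCost A Q d γ x)
      (Finite.bddAbove_range _) fun k => σ k)

lemma ofReal_one_sub_mul_iSup_le_valueFunLin (hQ : Q.PosSemidef) (hη1 : η < 1) (x : Fin n → ℝ) :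
    ENNReal.ofReal ((1 - η) * ⨆ γ : Fin l → Fin M, (1 - η)⁻¹ * truncCost A Q d γ x)
      ≤ valueFunLin A Q x := by
  have : Nonempty (Fin M) := ⟨d⟩
  obtain ⟨γ, hγ⟩ := exists_eq_ciSup_of_finite
    (f := fun γ : Fin l → Fin M => (1 - η)⁻¹ * truncCost A Q d γ x)
  rw [← hγ, ← mul_assoc, mul_inv_cancel₀ (sub_pos.2 hη1).ne', one_mul]
  exact ofReal_truncCost_le_valueFunLin A Q d hQ γ x

end Sandwich

theorem stmt_12_general {n M : ℕ} (hM : 0 < M) (A : Fin M → Matrix (Fin n) (Fin n) ℝ)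
    (Q : Matrix (Fin n) (Fin n) ℝ) (hQ : Q.PosDef)
    (η : ℕ → ℝ) (hη0 : ∀ l, 0 ≤ η l)
    (hη : ∀ (l : ℕ) (x : Fin n → ℝ) (σ : ℕ → Fin M),
      quadForm Q (trajL A σ x (l + 1)) ≤ η l * quadForm Q x)
    (hηlim : Tendsto η atTop (nhds 0)) :
    ∃ V : (l : ℕ) → (Fin l → Fin M) → (Fin n → ℝ) → ℝ,
      (∀ l : ℕ, η l < 1 →
        -- the functions are quadratic
        (∀ γ : Fin l → Fin M, ∃ P : Matrix (Fin n) (Fin n) ℝ,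
          P.PosSemidef ∧ ∀ x, V l γ x = quadForm P x) ∧
        -- path-complete inequalities on the dual De Bruijn graph H_l^T(M)
        (∀ (w : Fin (l + 1) → Fin M) (x : Fin n → ℝ),
          quadForm Q x + V l (fun k : Fin l => w k.succ) (A (w 0) *ᵥ x)
            ≤ V l (fun k : Fin l => w k.castSucc) x) ∧
        -- sandwich bound (1 − η_l) V^l(x) ≤ J(x) ≤ V^l(x)
        (∀ x : Fin n → ℝ,
          ENNReal.ofReal ((1 - η l) * ⨆ γ : Fin l → Fin M, V l γ x)
              ≤ valueFunLin A Q x ∧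
          valueFunLin A Q x ≤ ENNReal.ofReal (⨆ γ : Fin l → Fin M, V l γ x))) ∧
      -- pointwise convergence V^l → J
      (∀ x : Fin n → ℝ,
        Tendsto (fun l : ℕ => ENNReal.ofReal (⨆ γ : Fin l → Fin M, V l γ x))
          atTop (nhds (valueFunLin A Q x))) := by
  set d : Fin M := ⟨0, hM⟩
  have hsandwich : ∀ l, η l < 1 → ∀ x,
      ENNReal.ofReal ((1 - η l) * ⨆ γ : Fin l → Fin M, (1 - η l)⁻¹ * truncCost A Q d γ x)
          ≤ valueFunLin A Q x ∧
        valueFunLin A Q x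
          ≤ ENNReal.ofReal (⨆ γ : Fin l → Fin M, (1 - η l)⁻¹ * truncCost A Q d γ x) :=
    fun l hl x => ⟨ofReal_one_sub_mul_iSup_le_valueFunLin A d hQ.posSemidef hl x,
      valueFunLin_le_ofReal_iSup A d hQ.posSemidef (hη0 l) hl (hη l) x⟩
  refine ⟨fun l γ x => (1 - η l)⁻¹ * truncCost A Q d γ x, fun l hl => ⟨fun γ =>
      (isPSDQuadratic_truncCost A Q d hQ.posSemidef γ).const_mul (inv_nonneg.2 (sub_nonneg.2 hl.le)),
    quadForm_add_inv_mul_truncCost_succ_le A Q d hl (hη l), hsandwich l hl⟩, fun x => ?_⟩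
  have hev : ∀ᶠ l in atTop, η l < 1 := hηlim.eventually_lt_const one_pos
  refine ENNReal.tendsto_of_mul_le_of_le (c := fun l => ENNReal.ofReal (1 - η l)) ?_ ?_ ?_
  · have h1 : Tendsto (fun l => 1 - η l) atTop (nhds 1) := by
      simpa using (tendsto_const_nhds (x := (1 : ℝ))).sub hηlim
    simpa using ENNReal.tendsto_ofReal h1
  · filter_upwards [hev] with l hl
    rw [← ENNReal.ofReal_mul (sub_nonneg.2 hl.le)]
    exact (hsandwich l hl x).1
  · filter_upwards [hev] with l hl using (hsandwich l hl x).2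

theorem stmt_12 {n M : ℕ} (hM : 0 < M) (A : Fin M → Matrix (Fin n) (Fin n) ℝ)
    (Q : Matrix (Fin n) (Fin n) ℝ) (hQ : Q.PosDef)
    (C ρ : ℝ) (hC : 0 ≤ C) (hρ0 : 0 ≤ ρ) (hρ1 : ρ < 1)
    (hstab : ∀ (x : Fin n → ℝ) (σ : ℕ → Fin M) (k : ℕ),
      ‖trajL A σ x k‖ ≤ C * ρ ^ k * ‖x‖)
    (η : ℕ → ℝ) (hη0 : ∀ l, 0 ≤ η l)
    (hη : ∀ (l : ℕ) (x : Fin n → ℝ) (σ : ℕ → Fin M),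
      quadForm Q (trajL A σ x (l + 1)) ≤ η l * quadForm Q x)
    (hηlim : Tendsto η atTop (nhds 0)) :
    ∃ V : (l : ℕ) → (Fin l → Fin M) → (Fin n → ℝ) → ℝ,
      (∀ l : ℕ, η l < 1 →
        -- the functions are quadratic
        (∀ γ : Fin l → Fin M, ∃ P : Matrix (Fin n) (Fin n) ℝ,
          P.PosSemidef ∧ ∀ x, V l γ x = quadForm P x) ∧
        -- path-complete inequalities on the dual De Bruijn graph H_l^T(M)
        (∀ (w : Fin (l + 1) → Fin M) (x : Fin n → ℝ),
          quadForm Q x + V l (fun k : Fin l => w k.succ) (A (w 0) *ᵥ x)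
            ≤ V l (fun k : Fin l => w k.castSucc) x) ∧
        -- sandwich bound (1 − η_l) V^l(x) ≤ J(x) ≤ V^l(x)
        (∀ x : Fin n → ℝ,
          ENNReal.ofReal ((1 - η l) * ⨆ γ : Fin l → Fin M, V l γ x)
              ≤ valueFunLin A Q x ∧
          valueFunLin A Q x ≤ ENNReal.ofReal (⨆ γ : Fin l → Fin M, V l γ x))) ∧
      -- pointwise convergence V^l → J
      (∀ x : Fin n → ℝ,
        Tendsto (fun l : ℕ => ENNReal.ofReal (⨆ γ : Fin l → Fin M, V l γ x))
          atTop (nhds (valueFunLin A Q x))) :=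
  stmt_12_general hM A Q hQ η hη0 hη hηlim
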